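/- arXiv:1910.08642 — 2 statements merged into one kernel-verified Lean document; each statement's English description precedes it below -/
import Mathlib

section
/- Let G be a group acting by measure-preserving transformations on a probability space (X,μ), Δ a group, w : G × X → Δ a cocycle, and t a measure-preserving bijection of X commuting with the G-action. Suppose ε ∈ (0,1) and a subset G₂' = {h ∈ G : μ(A_h^t) > 1 − ε/4} satisfies the dichotomy: for every h ∈ G, either μ(A_h^t) < ε/4 or μ(A_h^t) > 1 − ε/4, where A_h^t = {x : w(h,x) = w(h,t⁻¹·x)}. Then G₂' is a subgroup of G. -/
/-!
The sets `A_h = {x | w(h, x) = w(h, t⁻¹ x)}` behave like a subgroup up to translation: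
`A_1` is everything, `A_{h⁻¹} = h • A_h`, and `A_b ∩ b⁻¹ • A_a ⊆ A_{ab}`, all by the cocycle
identity and `t` commuting with the action. Since the action preserves `μ`, `μ A_{h⁻¹} = μ A_h`,
and if `A_a`, `A_b` both have measure `> 1 - ε/4` then `μ A_{ab} > 1 - ε/2 > ε/4`, which the
dichotomy upgrades to `μ A_{ab} > 1 - ε/4`.
-/

open MeasureTheory

theorem measureReal_add_le_one_add_inter {X : Type*} [MeasurableSpace X] {μ : Measure X}
    [IsProbabilityMeasure μ] {s t : Set X} (ht : MeasurableSet t) :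
    μ.real s + μ.real t ≤ 1 + μ.real (s ∩ t) := by
  rw [← measureReal_union_add_inter ht]
  gcongr
  exact measureReal_le_one

section Cocycle

variable {G X Δ : Type*} [Group G] [Group Δ] [MulAction G X]

def IsCocycle (w : G → X → Δ) : Prop :=
  ∀ (g h : G) (x : X), w (g * h) x = w g (h • x) * w h x

def agreementSet (w : G → X → Δ) (t : X ≃ X) (g : G) : Set X :=
  {x | w g x = w g (t.symm x)}

variable {w : G → X → Δ} {t : X ≃ X}

theorem IsCocycle.apply_one (hw : IsCocycle w) (x : X) : w 1 x = 1 := by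
  simpa using hw 1 1 x

theorem IsCocycle.apply_inv (hw : IsCocycle w) (h : G) (x : X) :
    w h⁻¹ x = (w h (h⁻¹ • x))⁻¹ := by
  have := hw h h⁻¹ x
  rw [mul_inv_cancel, hw.apply_one] at this
  exact eq_inv_of_mul_eq_one_right this.symm

theorem Equiv.symm_smul_of_apply_smul (hcomm : ∀ (g : G) (x : X), t (g • x) = g • t x)
    (g : G) (x : X) : t.symm (g • x) = g • t.symm x :=
  t.symm_apply_eq.mpr (by rw [hcomm, t.apply_symm_apply])

theorem agreementSet_one (hw : IsCocycle w) : agreementSet w t 1 = Set.univ := by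
  ext x
  simp [agreementSet, hw.apply_one]

variable (hcomm : ∀ (g : G) (x : X), t (g • x) = g • t x)
include hcomm

theorem agreementSet_inv (hw : IsCocycle w) (h : G) :
    agreementSet w t h⁻¹ = (h⁻¹ • ·) ⁻¹' agreementSet w t h := by
  ext x
  simp only [agreementSet, Set.mem_ofPred_eq, Set.mem_preimage, hw.apply_inv,
    Equiv.symm_smul_of_apply_smul hcomm, inv_inj]

theorem agreementSet_inter_preimage_subset_mul (hw : IsCocycle w) (a b : G) :
    agreementSet w t b ∩ (b • ·) ⁻¹' agreementSet w t a ⊆ agreementSet w t (a * b) := by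
  rintro x ⟨hb, ha⟩
  simp only [agreementSet, Set.mem_ofPred_eq, Set.mem_preimage] at ha hb ⊢
  rw [hw, hw, hb, ha, Equiv.symm_smul_of_apply_smul hcomm]

variable [MeasurableSpace X] {μ : Measure X}
  (hG : ∀ g : G, MeasurePreserving (g • · : X → X) μ μ)
  (hmeas : ∀ g : G, MeasurableSet (agreementSet w t g))
include hG hmeas

theorem measureReal_agreementSet_inv (hw : IsCocycle w) (h : G) :
    μ.real (agreementSet w t h⁻¹) = μ.real (agreementSet w t h) := by
  rw [agreementSet_inv hcomm hw]
  exact (hG h⁻¹).measureReal_preimage (hmeas h).nullMeasurableSet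

theorem measureReal_agreementSet_add_le [IsProbabilityMeasure μ] (hw : IsCocycle w) (a b : G) :
    μ.real (agreementSet w t a) + μ.real (agreementSet w t b) ≤
      1 + μ.real (agreementSet w t (a * b)) :=
  calc μ.real (agreementSet w t a) + μ.real (agreementSet w t b)
      = μ.real (agreementSet w t b) + μ.real ((b • ·) ⁻¹' agreementSet w t a) := by
        rw [add_comm, (hG b).measureReal_preimage (hmeas a).nullMeasurableSet]
    _ ≤ 1 + μ.real (agreementSet w t b ∩ (b • ·) ⁻¹' agreementSet w t a) :=
        measureReal_add_le_one_add_inter ((hG b).measurable (hmeas a))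
    _ ≤ 1 + μ.real (agreementSet w t (a * b)) := by
        gcongr
        · exact measure_ne_top μ _
        · exact agreementSet_inter_preimage_subset_mul hcomm hw a b

end Cocycle

theorem stmt2_general {G X Δ : Type*} [Group G] [Group Δ] [MulAction G X]
    [MeasurableSpace X] (μ : Measure X) [IsProbabilityMeasure μ]
    (hG : ∀ g : G, MeasurePreserving (fun x : X => g • x) μ μ)
    (t : X ≃ X)
    (hcomm : ∀ (g : G) (x : X), t (g • x) = g • t x)
    (w : G → X → Δ)
    (hw : ∀ (g h : G) (x : X), w (g * h) x = w g (h • x) * w h x)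
    (hmeas : ∀ g : G, MeasurableSet {x | w g x = w g (t.symm x)})
    (ε : ℝ) (hε0 : 0 < ε) (hε1 : ε < 1)
    (hdich : ∀ h : G, (μ {x | w h x = w h (t.symm x)}).toReal < ε / 4 ∨
      1 - ε / 4 < (μ {x | w h x = w h (t.symm x)}).toReal) :
    ∃ H : Subgroup G,
      (H : Set G) = {h : G | 1 - ε / 4 < (μ {x | w h x = w h (t.symm x)}).toReal} := by
  refine ⟨{ carrier := {h | 1 - ε / 4 < μ.real (agreementSet w t h)}
            one_mem' := ?one, mul_mem' := fun {a b} ha hb => ?mul, inv_mem' := fun {a} ha => ?inv },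
    rfl⟩
  case one =>
    change 1 - ε / 4 < μ.real (agreementSet w t 1)
    rw [agreementSet_one hw, probReal_univ]
    linarith
  case mul =>
    change 1 - ε / 4 < μ.real (agreementSet w t a) at ha
    change 1 - ε / 4 < μ.real (agreementSet w t b) at hb
    have hab := measureReal_agreementSet_add_le hcomm hG hmeas hw a b
    refine (hdich (a * b)).resolve_left ?_
    change ¬μ.real (agreementSet w t (a * b)) < ε / 4
    linarith
  case inv =>
    change 1 - ε / 4 < μ.real (agreementSet w t a⁻¹)
    rwa [measureReal_agreementSet_inv hcomm hG hmeas hw]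

theorem stmt2 {G X Δ : Type*} [Group G] [Group Δ] [MulAction G X]
    [MeasurableSpace X] (μ : Measure X) [IsProbabilityMeasure μ]
    (hG : ∀ g : G, MeasurePreserving (fun x : X => g • x) μ μ)
    (t : X ≃ X) (ht : MeasurePreserving t μ μ)
    (hcomm : ∀ (g : G) (x : X), t (g • x) = g • t x)
    (w : G → X → Δ)
    (hw : ∀ (g h : G) (x : X), w (g * h) x = w g (h • x) * w h x)
    (hmeas : ∀ g : G, MeasurableSet {x | w g x = w g (t.symm x)})
    (ε : ℝ) (hε0 : 0 < ε) (hε1 : ε < 1)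
    (hdich : ∀ h : G, (μ {x | w h x = w h (t.symm x)}).toReal < ε / 4 ∨
      1 - ε / 4 < (μ {x | w h x = w h (t.symm x)}).toReal) :
    ∃ H : Subgroup G,
      (H : Set G) = {h : G | 1 - ε / 4 < (μ {x | w h x = w h (t.symm x)}).toReal} :=
  stmt2_general μ hG t hcomm w hw hmeas ε hε0 hε1 hdich
end

section
/- Let K be a compact group with Haar probability measure, M ≤ K a closed subgroup, and Γ ≤ K a subgroup. Suppose L ≤ K is an open subgroup such that Γ ∩ L is dense in L. Then the image LM/M ⊆ K/M is an ergodic component for the left-translation action of Γ ∩ L on K/M: the action of Γ ∩ L on (LM/M, normalized measure) is ergodic. -/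
/-!
Pull `A` back to `B ⊆ K`. Being invariant mod null sets under `g * ·` is a closed condition on
`g` (translations act continuously in measure), so `B` is a.e. invariant under all of `L`. By
Fubini, for a.e. `x` we get `x ∈ B ↔ ∀ᵐ b ∈ L, b * x ∈ B`. For `x ∈ lM` the right-hand side only
depends on `l ∈ L`, and since Haar measure on a compact group is also right invariant, it does not
depend on `l` either; so a.e. point of `LM` is in `B`, or a.e. point of `LM` is outside it.
-/

open MeasureTheory Set Filter

namespace MeasureTheory

variable {G : Type*} [Group G] [MeasurableSpace G]

theorem Measure.isMulRightInvariant_of_compactSpace [TopologicalSpace G] [IsTopologicalGroup G]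
    [CompactSpace G] [BorelSpace G] (μ : Measure G) [μ.IsHaarMeasure] :
    μ.IsMulRightInvariant := by
  refine ⟨fun g ↦ ?_⟩
  have hc := Measure.isMulInvariant_eq_smul_of_compactSpace (μ.map (· * g)) μ
  have huniv : μ.map (· * g) univ = μ univ := by
    rw [Measure.map_apply (measurable_mul_const g) MeasurableSet.univ, preimage_univ]
  rw [hc, Measure.smul_apply, ENNReal.smul_def, smul_eq_mul] at huniv
  have hone : Measure.haarScalarFactor (μ.map (· * g)) μ = 1 := by
    exact_mod_cast (ENNReal.mul_eq_right (isOpen_univ.measure_ne_zero μ univ_nonempty)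
      (measure_ne_top μ univ)).1 huniv
  rw [hc, hone, one_smul]

theorem isClosed_setOf_preimage_mul_left_ae_eq [TopologicalSpace G] [IsTopologicalGroup G]
    [BorelSpace G] (μ : Measure G) [μ.InnerRegularCompactLTTop] [IsLocallyFiniteMeasure μ]
    [μ.IsMulLeftInvariant] {s : Set G} (hs : NullMeasurableSet s μ) (hμs : μ s ≠ ⊤) :
    IsClosed {g : G | (g * ·) ⁻¹' s =ᵐ[μ] s} :=
  isClosed_setOfPred_preimage_ae_eq (f := fun g ↦ ⟨(g * ·), continuous_const_mul g⟩)
    (ContinuousMap.curry ⟨fun p : G × G ↦ p.1 * p.2, continuous_mul⟩).continuous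
    (measurePreserving_mul_left μ) s hs hμs

theorem ae_mem_iff_ae_mul_mem [MeasurableMul₂ G] {μ ν : Measure G} [SFinite μ] [SFinite ν]
    [NeZero ν] {s : Set G} (hs : MeasurableSet s) (h : ∀ᵐ b ∂ν, (b * ·) ⁻¹' s =ᵐ[μ] s) :
    ∀ᵐ x ∂μ, (x ∈ s ↔ ∀ᵐ b ∂ν, b * x ∈ s) := by
  have hs₂ : MeasurableSet {p : G × G | p.1 * p.2 ∈ s ↔ p.2 ∈ s} :=
    ((hs.preimage (measurable_fst.mul measurable_snd)).mem.iff
      (hs.preimage measurable_snd).mem).setOf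
  have hcomm : ∀ᵐ x ∂μ, ∀ᵐ b ∂ν, (b * x ∈ s ↔ x ∈ s) :=
    (Measure.ae_ae_comm hs₂).1 (h.mono fun _ hb ↦ hb.mem_iff)
  filter_upwards [hcomm] with x hx
  rw [eventually_congr hx, eventually_const]

section RightInvariant

variable [MeasurableMul G] (μ : Measure G) [μ.IsMulRightInvariant] {H : Subgroup G} {h : G}

theorem measurePreserving_mul_right_restrict_subgroup (hH : MeasurableSet (H : Set G))
    (hh : h ∈ H) :
    MeasurePreserving (· * h) (μ.restrict H) (μ.restrict H) := by
  have hpre : (· * h) ⁻¹' (H : Set G) = H := by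
    ext x
    simp [H.mul_mem_cancel_right hh]
  simpa only [hpre] using (measurePreserving_mul_right μ h).restrict_preimage hH

theorem ae_restrict_subgroup_mul_right_iff (hH : MeasurableSet (H : Set G)) (hh : h ∈ H)
    {p : G → Prop} :
    (∀ᵐ b ∂μ.restrict H, p (b * h)) ↔ ∀ᵐ b ∂μ.restrict H, p b := by
  refine ⟨fun hp ↦ ?_,
    (measurePreserving_mul_right_restrict_subgroup μ hH hh).quasiMeasurePreserving.ae⟩
  simpa using
    (measurePreserving_mul_right_restrict_subgroup μ hH (H.inv_mem hh)).quasiMeasurePreserving.ae hp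

theorem ae_restrict_subgroup_mul_mem_preimage_mk_iff {N : Subgroup G}
    (hH : MeasurableSet (H : Set G)) {A : Set (G ⧸ N)} {x : G} (hh : h ∈ H)
    (hhx : (h : G ⧸ N) = x) :
    (∀ᵐ b ∂μ.restrict H, b * x ∈ (QuotientGroup.mk : G → G ⧸ N) ⁻¹' A) ↔
      ∀ᵐ b ∂μ.restrict H, b ∈ (QuotientGroup.mk : G → G ⧸ N) ⁻¹' A := by
  refine (eventually_congr (ae_of_all _ fun b ↦ ?_)).trans
    (ae_restrict_subgroup_mul_right_iff μ hH hh)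
  change ((b • x : G) : G ⧸ N) ∈ A ↔ ((b • h : G) : G ⧸ N) ∈ A
  rw [← MulAction.Quotient.smul_mk, ← MulAction.Quotient.smul_mk, hhx]

end RightInvariant

theorem measure_eq_zero_or_measure_sdiff_eq_zero_of_ae_mem_iff {α : Type*} [MeasurableSpace α]
    {μ : Measure α} {s t : Set α} (hst : s ⊆ t) (P : Prop) (h : ∀ᵐ x ∂μ, x ∈ t → (x ∈ s ↔ P)) :
    μ s = 0 ∨ μ (t \ s) = 0 := by
  simp only [measure_eq_zero_iff_ae_notMem]
  by_cases hP : P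
  · exact .inr <| h.mono fun x hx ⟨hxt, hxs⟩ ↦ hxs ((hx hxt).2 hP)
  · exact .inl <| h.mono fun x hx hxs ↦ hP ((hx (hst hxs)).1 hxs)

end MeasureTheory

theorem stmt17_general {K : Type*} [Group K] [TopologicalSpace K] [IsTopologicalGroup K]
    [CompactSpace K] [SecondCountableTopology K]
    [MeasurableSpace K] [BorelSpace K]
    (μ : Measure K) [μ.IsHaarMeasure]
    (M : Subgroup K)
    (Γ L : Subgroup K) (hL : IsOpen (L : Set K))
    (hdense : (L : Set K) ⊆ closure ((Γ ⊓ L : Subgroup K) : Set K)) :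
    ∀ A : Set (K ⧸ M), MeasurableSet A →
      A ⊆ QuotientGroup.mk '' (L : Set K) →
      (∀ γ ∈ Γ ⊓ L,
        (Measure.map QuotientGroup.mk μ) (symmDiff ((fun z : K ⧸ M => γ • z) ⁻¹' A) A) = 0) →
      (Measure.map QuotientGroup.mk μ) A = 0 ∨
        (Measure.map QuotientGroup.mk μ) ((QuotientGroup.mk '' (L : Set K)) \ A) = 0 := by
  intro A hA hAL hinv
  have hmk : Measurable (QuotientGroup.mk : K → K ⧸ M) := QuotientGroup.measurable_coe
  set B : Set K := (QuotientGroup.mk : K → K ⧸ M) ⁻¹' A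
  have hB : MeasurableSet B := hmk hA
  have hLMmeas : MeasurableSet (QuotientGroup.mk '' (L : Set K) : Set (K ⧸ M)) :=
    measurableSet_quotient.2
      ((QuotientGroup.isOpenMap_coe _ hL).preimage QuotientGroup.continuous_mk).measurableSet
  have : μ.IsMulRightInvariant := Measure.isMulRightInvariant_of_compactSpace μ
  have : NeZero (μ.restrict L) :=
    ⟨by simpa [Measure.restrict_eq_zero] using hL.measure_ne_zero μ ⟨1, L.one_mem⟩⟩
  have hΓ : ∀ γ ∈ Γ ⊓ L, (γ * ·) ⁻¹' B =ᵐ[μ] B := fun γ hγ ↦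
    measure_symmDiff_eq_zero_iff.1 <| nonpos_iff_eq_zero.1 <|
      (Measure.le_map_apply hmk.aemeasurable _).trans (hinv γ hγ).le
  have hL_stab : ∀ g ∈ L, (g * ·) ⁻¹' B =ᵐ[μ] B := fun g hg ↦
    closure_minimal hΓ (isClosed_setOf_preimage_mul_left_ae_eq μ hB.nullMeasurableSet
      (measure_ne_top μ B)) (hdense hg)
  have hconst : ∀ᵐ x ∂μ, x ∈ (QuotientGroup.mk : K → K ⧸ M) ⁻¹' (QuotientGroup.mk '' L) →
      (x ∈ B ↔ ∀ᵐ b ∂μ.restrict L, b ∈ B) := by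
    filter_upwards [ae_mem_iff_ae_mul_mem (ν := μ.restrict L) hB
      ((ae_restrict_iff' hL.measurableSet).2 (ae_of_all _ hL_stab))] with x hx ⟨l, hl, hlx⟩
    exact hx.trans (ae_restrict_subgroup_mul_mem_preimage_mk_iff μ hL.measurableSet hl hlx)
  rw [Measure.map_apply hmk hA, Measure.map_apply hmk (hLMmeas.diff hA), preimage_sdiff]
  exact measure_eq_zero_or_measure_sdiff_eq_zero_of_ae_mem_iff (preimage_mono hAL) _ hconst

theorem stmt17 {K : Type*} [Group K] [TopologicalSpace K] [IsTopologicalGroup K]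
    [CompactSpace K] [T2Space K] [SecondCountableTopology K]
    [MeasurableSpace K] [BorelSpace K]
    (μ : Measure K) [μ.IsHaarMeasure] [IsProbabilityMeasure μ]
    (M : Subgroup K) (hM : IsClosed (M : Set K))
    (Γ L : Subgroup K) (hL : IsOpen (L : Set K))
    (hdense : (L : Set K) ⊆ closure ((Γ ⊓ L : Subgroup K) : Set K)) :
    ∀ A : Set (K ⧸ M), MeasurableSet A →
      A ⊆ QuotientGroup.mk '' (L : Set K) →
      (∀ γ ∈ Γ ⊓ L,
        (Measure.map QuotientGroup.mk μ) (symmDiff ((fun z : K ⧸ M => γ • z) ⁻¹' A) A) = 0) →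
      (Measure.map QuotientGroup.mk μ) A = 0 ∨
        (Measure.map QuotientGroup.mk μ) ((QuotientGroup.mk '' (L : Set K)) \ A) = 0 :=
  stmt17_general μ M Γ L hL hdense
end
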